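/- Let f : [-1/2,1/2] → ℝ be convex and for each integer j ≥ 1 set b_j = 2^{j-1} ∫_{-2^{-j}}^{2^{-j}} f(t) dt − f(0). Then for every integer j ≥ 1 one has b_j − 3 b_{j+1} + 2 b_{j+2} ≥ 0. -/

import Mathlib

/-!
With `h = 2^(-j)` the `f 0` terms cancel (`1 - 3 + 2 = 0`), and after rescaling the three
averages to the common interval `[-h, h]` the claim is that the mean of
`f x - 3 f (x/2) + 2 f (x/4)` over `[-h, h]` is nonnegative. This holds pointwise by convexity,
because `x / 2 = (1/3) x + (2/3) (x/4)`.
-/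

open MeasureTheory Set

section ConvexOnInterval

variable {f : ℝ → ℝ}

theorem ConvexOn.exists_abs_le_of_Icc {a b : ℝ} (hf : ConvexOn ℝ (Icc a b) f) :
    ∃ M, ∀ x ∈ Icc a b, |f x| ≤ M := by
  refine ⟨max (max (f a) (f b)) (max (f a) (f b) - 2 * f ((a + b) / 2)), fun x hx => ?_⟩
  have hab : a ≤ b := hx.1.trans hx.2
  have ha : a ∈ Icc a b := left_mem_Icc.2 hab
  have hb : b ∈ Icc a b := right_mem_Icc.2 hab
  -- The lower bound comes from convexity at the midpoint of `x` and its reflection.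
  have hx' : a + b - x ∈ Icc a b := ⟨by linarith [hx.2], by linarith [hx.1]⟩
  have upper : f x ≤ max (f a) (f b) := hf.le_max_of_mem_Icc ha hb hx
  have upper' : f (a + b - x) ≤ max (f a) (f b) := hf.le_max_of_mem_Icc ha hb hx'
  have midpoint : f ((a + b) / 2) ≤ 2⁻¹ * f x + 2⁻¹ * f (a + b - x) := by
    have h := hf.2 hx hx' (by norm_num : (0 : ℝ) ≤ 2⁻¹) (by norm_num : (0 : ℝ) ≤ 2⁻¹)
      (by norm_num)
    simp only [smul_eq_mul] at h
    rwa [show 2⁻¹ * x + 2⁻¹ * (a + b - x) = (a + b) / 2 by ring] at h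
  rw [abs_le]
  constructor
  · linarith [le_max_right (max (f a) (f b)) (max (f a) (f b) - 2 * f ((a + b) / 2))]
  · exact upper.trans (le_max_left _ _)

theorem ConvexOn.intervalIntegrable {a b : ℝ} (hf : ConvexOn ℝ (Icc a b) f) (hab : a ≤ b) :
    IntervalIntegrable f volume a b := by
  obtain ⟨M, hM⟩ := hf.exists_abs_le_of_Icc
  have hcont : ContinuousOn f (Ioo a b) := by
    simpa only [interior_Icc] using hf.continuousOn_interior
  rw [intervalIntegrable_iff_integrableOn_Ioo_of_le hab]
  refine ⟨hcont.aestronglyMeasurable measurableSet_Ioo,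
    .restrict_of_bounded (C := M) measure_Ioo_lt_top ?_⟩
  exact ae_restrict_of_forall_mem measurableSet_Ioo fun x hx => hM x (Ioo_subset_Icc_self hx)

theorem div_mem_Icc_neg_self {h x c : ℝ} (hx : x ∈ Icc (-h) h) (hc : 1 ≤ c) :
    x / c ∈ Icc (-h) h := by
  rw [mem_Icc, ← abs_le] at hx ⊢
  rw [abs_div, abs_of_pos (by linarith : 0 < c)]
  exact (div_le_self (abs_nonneg x) hc).trans hx

theorem ConvexOn.comp_div_of_one_le {h c : ℝ} (hf : ConvexOn ℝ (Icc (-h) h) f) (hc : 1 ≤ c) :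
    ConvexOn ℝ (Icc (-h) h) fun x => f (x / c) := by
  refine ⟨convex_Icc _ _, fun x hx y hy μ ν hμ hν hμν => ?_⟩
  have h := hf.2 (div_mem_Icc_neg_self hx hc) (div_mem_Icc_neg_self hy hc) hμ hν hμν
  simp only [smul_eq_mul] at h ⊢
  rwa [show (μ * x + ν * y) / c = μ * (x / c) + ν * (y / c) by ring]

theorem ConvexOn.three_mul_le_add_two_mul {s : Set ℝ} (hf : ConvexOn ℝ s f) {x : ℝ}
    (hx : x ∈ s) (hx4 : x / 4 ∈ s) : 3 * f (x / 2) ≤ f x + 2 * f (x / 4) := by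
  have h := hf.2 hx hx4 (by norm_num : (0 : ℝ) ≤ 1 / 3) (by norm_num : (0 : ℝ) ≤ 2 / 3)
    (by norm_num)
  simp only [smul_eq_mul] at h
  rw [show 1 / 3 * x + 2 / 3 * (x / 4) = x / 2 by ring] at h
  linarith

end ConvexOnInterval

/-- The paper's bias is `b j = centeredAverage f (2^(-j)) - f 0`, as `2^(j-1) = (2 * 2^(-j))⁻¹`. -/
noncomputable def centeredAverage (f : ℝ → ℝ) (h : ℝ) : ℝ :=
  (2 * h)⁻¹ * ∫ t in -h..h, f t

theorem centeredAverage_div (f : ℝ → ℝ) (h : ℝ) {c : ℝ} (hc : c ≠ 0) :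
    centeredAverage f (h / c) = (2 * h)⁻¹ * ∫ x in -h..h, f (x / c) := by
  rw [centeredAverage, intervalIntegral.integral_comp_div f hc, smul_eq_mul, neg_div, mul_inv,
    mul_inv, inv_div]
  ring

theorem ConvexOn.centeredAverage_sub_three_mul_add_two_mul_nonneg {f : ℝ → ℝ} {h : ℝ}
    (hf : ConvexOn ℝ (Icc (-h) h) f) (hh : 0 ≤ h) :
    0 ≤ centeredAverage f h - 3 * centeredAverage f (h / 2) + 2 * centeredAverage f (h / 4) := by
  have hle : -h ≤ h := by linarith
  have I1 := hf.intervalIntegrable hle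
  have I2 := (hf.comp_div_of_one_le one_le_two).intervalIntegrable hle
  have I4 := (hf.comp_div_of_one_le (by norm_num : (1 : ℝ) ≤ 4)).intervalIntegrable hle
  have pointwise : ∀ x ∈ Icc (-h) h, 0 ≤ f x - 3 * f (x / 2) + 2 * f (x / 4) := fun x hx => by
    linarith [hf.three_mul_le_add_two_mul hx (div_mem_Icc_neg_self hx (by norm_num))]
  calc 0 ≤ (2 * h)⁻¹ * ∫ x in -h..h, (f x - 3 * f (x / 2) + 2 * f (x / 4)) :=
        mul_nonneg (by positivity) (intervalIntegral.integral_nonneg hle pointwise)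
    _ = _ := by
      rw [intervalIntegral.integral_add (I1.sub (I2.const_mul 3)) (I4.const_mul 2),
        intervalIntegral.integral_sub I1 (I2.const_mul 3), intervalIntegral.integral_const_mul,
        intervalIntegral.integral_const_mul, centeredAverage_div f h two_ne_zero,
        centeredAverage_div f h four_ne_zero, centeredAverage]
      ring

theorem bias_convex_combination_ineq
    (f : ℝ → ℝ) (hf : ConvexOn ℝ (Set.Icc (-(1:ℝ)/2) (1/2)) f)
    (b : ℕ → ℝ)
    (hb : ∀ j : ℕ, 1 ≤ j →
      b j = (2:ℝ) ^ ((j:ℤ) - 1) * (∫ t in (-(2:ℝ) ^ (-(j:ℤ)))..((2:ℝ) ^ (-(j:ℤ))), f t) - f 0) :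
    ∀ j : ℕ, 1 ≤ j → 0 ≤ b j - 3 * b (j + 1) + 2 * b (j + 2) := by
  intro j hj
  have hb_avg : ∀ k : ℕ, 1 ≤ k → b k = centeredAverage f (2 ^ (-(k : ℤ))) - f 0 := by
    intro k hk
    rw [hb k hk, centeredAverage, zpow_sub₀ two_ne_zero, zpow_neg, zpow_one]
    field_simp
  set h : ℝ := 2 ^ (-(j : ℤ)) with h_def
  have hh : 0 ≤ h := by positivity
  have hh_half : h ≤ 1 / 2 := by
    calc h ≤ (2 : ℝ) ^ (-1 : ℤ) := zpow_le_zpow_right₀ one_le_two (by omega)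
      _ = 1 / 2 := by norm_num
  have h_succ : (2 : ℝ) ^ (-((j + 1 : ℕ) : ℤ)) = h / 2 := by
    rw [h_def, Nat.cast_succ, neg_add, zpow_add₀ two_ne_zero, zpow_neg_one, div_eq_mul_inv]
  have h_succ_succ : (2 : ℝ) ^ (-((j + 2 : ℕ) : ℤ)) = h / 4 := by
    rw [h_def, Nat.cast_add, neg_add, zpow_add₀ two_ne_zero, zpow_neg, div_eq_mul_inv]
    norm_num
  have hf_h : ConvexOn ℝ (Icc (-h) h) f :=
    hf.subset (Icc_subset_Icc (by linarith) (by linarith)) (convex_Icc _ _)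
  rw [hb_avg j hj, hb_avg (j + 1) (by omega), hb_avg (j + 2) (by omega), h_succ, h_succ_succ]
  linarith [hf_h.centeredAverage_sub_three_mul_add_two_mul_nonneg hh]
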